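/- arXiv:1909.11623 — 2 statements merged into one kernel-verified Lean document; each statement's English description precedes it below -/
import Mathlib

section
/- If $\mathcal{A}$ is a maximal $\kappa$-independent family, then the collection of Boolean combinations $\{\mathcal{A}^h : h \in \mathrm{FF}_{<\omega,\kappa}(\mathcal{A})\}$ is not split by any single set: there is no $X \in [\kappa]^\kappa$ such that for every Boolean combination $\mathcal{A}^h$, both $\mathcal{A}^h \cap X$ and $\mathcal{A}^h \setminus X$ are unbounded in $\kappa$. Consequently, the generalized reaping number $\mathfrak{r}(\kappa)$ is at most the cardinality of any maximal $\kappa$-independent family, so $\mathfrak{r}(\kappa) \le \mathfrak{i}(\kappa)$. -/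
/-!
If `X ∈ [κ]^κ` split every Boolean combination of `𝒜`, then every Boolean combination of
`𝒜 ∪ {X}` (one of `𝒜^h ∩ X`, `𝒜^h \ X`, `𝒜^h`) would be unbounded, so maximality would force
`X ∈ 𝒜`; but `X` does not split the combination `𝒜^{X ↦ 1} ⊆ X`. A finite independent family
always admits such an `X`: halve each of its finitely many atoms, which are pairwise disjoint
and of size `κ`. So a maximal family is infinite and has only `|𝒜|` Boolean combinations; by
regularity each has size `κ`, and together they form an unsplit family of size at most `|𝒜|`.
-/

open Set Cardinal

/-- Finite partial functions from a family of sets to `{0,1}` (as `Option Bool`):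
`h s = some true` means `s` is taken positively, `some false` negatively. -/
def FF {α : Type*} (𝒜 : Set (Set α)) : Set (Set α → Option Bool) :=
  {h | (∀ s, h s ≠ none → s ∈ 𝒜) ∧ {s | h s ≠ none}.Finite}

/-- The Boolean combination determined by a partial function `h`. -/
def bc {α : Type*} (h : Set α → Option Bool) : Set α :=
  {x | ∀ s : Set α, (h s = some true → x ∈ s) ∧ (h s = some false → x ∉ s)}

/-- `h'` extends `h` as a partial function. -/
def extFF {α : Type*} (h h' : Set α → Option Bool) : Prop :=
  ∀ s b, h s = some b → h' s = some b

/-- A family is κ-independent if every finite Boolean combination is unbounded. -/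
def kIndepF {α : Type*} [Preorder α] (𝒜 : Set (Set α)) : Prop :=
  ∀ h ∈ FF 𝒜, ¬ BddAbove (bc h)
/-- `X` splits `R` if both `R ∩ X` and `R \ X` are unbounded. -/
def splits {α : Type*} [Preorder α] (X R : Set α) : Prop :=
  ¬ BddAbove (R ∩ X) ∧ ¬ BddAbove (R \ X)

/-- `𝒜 ⊆ [κ]^κ` is a κ-independent family. -/
def kIndepFam (κ : Cardinal) (𝒜 : Set (Set κ.ord.ToType)) : Prop :=
  (∀ X ∈ 𝒜, #X = κ) ∧ ∀ h ∈ FF 𝒜, ¬ BddAbove (bc h)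

/-- `𝒜` is a maximal κ-independent family. -/
def maxIndep (κ : Cardinal) (𝒜 : Set (Set κ.ord.ToType)) : Prop :=
  kIndepFam κ 𝒜 ∧ ∀ ℬ, kIndepFam κ ℬ → 𝒜 ⊆ ℬ → ℬ = 𝒜

/-- The generalized reaping number `𝔯(κ)`: least size of a family in `[κ]^κ`
not split by any single `X ∈ [κ]^κ`. -/
noncomputable def reap (κ : Cardinal) : Cardinal :=
  sInf {c | ∃ R : Set (Set κ.ord.ToType), #R = c ∧ (∀ r ∈ R, #r = κ) ∧
    ¬ ∃ X : Set κ.ord.ToType, #X = κ ∧ ∀ r ∈ R, splits X r}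

/-- The higher independence number `𝔦(κ)`: least size of a maximal κ-independent family. -/
noncomputable def iNum (κ : Cardinal) : Cardinal :=
  sInf {c | ∃ 𝒜, maxIndep κ 𝒜 ∧ #𝒜 = c}

open Function

section BooleanCombinations

variable {α : Type*}

theorem bc_subset_bc_of_extFF {h h' : Set α → Option Bool} (hext : extFF h h') :
    bc h' ⊆ bc h :=
  fun _ hx s => ⟨fun hs => (hx s).1 (hext s _ hs), fun hs => (hx s).2 (hext s _ hs)⟩

theorem mem_bc_iff_update_none (h : Set α → Option Bool) (X : Set α) (x : α) :
    x ∈ bc h ↔ x ∈ bc (update h X none) ∧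
      (h X = some true → x ∈ X) ∧ (h X = some false → x ∉ X) := by
  constructor
  · intro hx
    refine ⟨fun s => ?_, hx X⟩
    rcases eq_or_ne s X with rfl | hs
    · simp
    · simpa [update_of_ne hs] using hx s
  · rintro ⟨hx, hxX⟩ s
    rcases eq_or_ne s X with rfl | hs
    · exact hxX
    · simpa [update_of_ne hs] using hx s

theorem update_none_mem_FF {𝒜 : Set (Set α)} {X : Set α} {h : Set α → Option Bool}
    (hh : h ∈ FF (insert X 𝒜)) : update h X none ∈ FF 𝒜 := by
  refine ⟨fun s hs => ?_, hh.2.subset fun s hs => ?_⟩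
  · rcases eq_or_ne s X with rfl | hsX
    · simp at hs
    · rw [update_of_ne hsX] at hs
      exact (hh.1 s hs).resolve_left hsX
  · rcases eq_or_ne s X with rfl | hsX
    · simp at hs
    · simpa [update_of_ne hsX] using hs

end BooleanCombinations

section SplittingByOneSet

variable {α : Type*} [Preorder α] {𝒜 : Set (Set α)} {X : Set α}

theorem kIndepF_insert_of_forall_splits (hX : ∀ h ∈ FF 𝒜, splits X (bc h)) :
    kIndepF (insert X 𝒜) := by
  intro h hh hbdd
  have hsplit := hX _ (update_none_mem_FF hh)
  have hsub : ∀ Y, (h X = some true → Y ⊆ X) → (h X = some false → Disjoint Y X) →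
      bc (update h X none) ∩ Y ⊆ bc h := fun Y hpos hneg x hx =>
    (mem_bc_iff_update_none h X x).2
      ⟨hx.1, fun h1 => hpos h1 hx.2, fun h0 => disjoint_left.1 (hneg h0) hx.2⟩
  rcases hhX : h X with _ | _ | _
  · exact hsplit.1 (hbdd.mono (hsub X (by simp [hhX]) (by simp [hhX])))
  · exact hsplit.2 (hbdd.mono (hsub Xᶜ (by simp [hhX]) fun _ => disjoint_compl_left))
  · exact hsplit.1 (hbdd.mono (hsub X (fun _ => subset_rfl) (by simp [hhX])))

theorem not_mem_of_forall_splits [Nonempty α] (hX : ∀ h ∈ FF 𝒜, splits X (bc h)) :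
    X ∉ 𝒜 := by
  classical
  intro hX𝒜
  set h : Set α → Option Bool := fun s => if s = X then some true else none
  have hh : h ∈ FF 𝒜 := by
    refine ⟨fun s hs => ?_, (finite_singleton X).subset fun s hs => ?_⟩ <;>
      by_cases hsX : s = X <;> simp_all [h]
  have hbc : bc h \ X = ∅ := sdiff_eq_empty.2 fun x hx => (hx X).1 (by simp [h])
  exact (hX h hh).2 (hbc ▸ bddAbove_empty)

end SplittingByOneSet

section Cardinality

variable {α : Type*}

theorem exists_subset_mk_eq_and_mk_diff_eq {S : Set α} (hS : ℵ₀ ≤ #S) :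
    ∃ T ⊆ S, #T = #S ∧ #(S \ T : Set α) = #S := by
  obtain ⟨e⟩ : Nonempty (S ≃ S ⊕ S) := Cardinal.eq.1 (by simp [add_eq_self hS])
  set t : Set S := e ⁻¹' range Sum.inl
  have hcompl : tᶜ = e ⁻¹' range Sum.inr := by
    rw [← preimage_compl, compl_range_inl]
  refine ⟨Subtype.val '' t, image_val_subset, ?_, ?_⟩
  · rw [mk_image_eq Subtype.val_injective, mk_preimage_equiv, mk_range_inl, lift_id]
  · rw [← image_val_compl, mk_image_eq Subtype.val_injective, hcompl, mk_preimage_equiv,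
      mk_range_inr, lift_id]

theorem exists_forall_mk_inter_eq_and_mk_diff_eq {ι : Type*} {S : ι → Set α}
    (hdisj : Pairwise (Disjoint on S)) (hS : ∀ i, ℵ₀ ≤ #(S i)) :
    ∃ X : Set α, ∀ i, #(S i ∩ X : Set α) = #(S i) ∧ #(S i \ X : Set α) = #(S i) := by
  choose T hTS hT hST using fun i => exists_subset_mk_eq_and_mk_diff_eq (hS i)
  have hinter : ∀ i, S i ∩ ⋃ j, T j = T i := fun i => by
    refine subset_antisymm (fun x ⟨hxi, hx⟩ => ?_)
      fun x hx => ⟨hTS i hx, mem_iUnion_of_mem i hx⟩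
    obtain ⟨j, hxj⟩ := mem_iUnion.1 hx
    obtain rfl : j = i := by_contra fun hji => disjoint_left.1 (hdisj hji) (hTS j hxj) hxi
    exact hxj
  refine ⟨⋃ j, T j, fun i => ⟨by rw [hinter, hT], ?_⟩⟩
  rw [← sdiff_self_inter, hinter, hST]

end Cardinality

section Atoms

variable {α : Type*} (𝒜 : Set (Set α))

open Classical in
/-- `bc (atomFF 𝒜 g)` is an atom of the Boolean algebra generated by `𝒜`. -/
noncomputable def atomFF (g : 𝒜 → Bool) : Set α → Option Bool :=
  fun s => if hs : s ∈ 𝒜 then some (g ⟨s, hs⟩) else none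

variable {𝒜}

theorem mem_bc_atomFF_iff {g : 𝒜 → Bool} {x : α} :
    x ∈ bc (atomFF 𝒜 g) ↔ ∀ s : 𝒜, x ∈ (s : Set α) ↔ g s = true := by
  refine ⟨fun hx s => ?_, fun hx s => ?_⟩
  · have := hx s
    cases hg : g s <;> simp_all [atomFF]
  · by_cases hs : s ∈ 𝒜
    · have := hx ⟨s, hs⟩
      cases hg : g ⟨s, hs⟩ <;> simp_all [atomFF]
    · simp [atomFF, hs]

theorem atomFF_mem_FF (h𝒜 : 𝒜.Finite) (g : 𝒜 → Bool) : atomFF 𝒜 g ∈ FF 𝒜 :=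
  ⟨fun s hs => by by_contra h; simp [atomFF, h] at hs,
    h𝒜.subset fun s hs => by by_contra h; simp [atomFF, h] at hs⟩

theorem pairwise_disjoint_bc_atomFF :
    Pairwise (Disjoint on fun g : 𝒜 → Bool => bc (atomFF 𝒜 g)) :=
  fun g g' hne => disjoint_left.2 fun x hx hx' => hne <| funext fun s => by
    rw [mem_bc_atomFF_iff] at hx hx'
    exact Bool.eq_iff_iff.2 ((hx s).symm.trans (hx' s))

theorem extFF_atomFF_getD {h : Set α → Option Bool} (hh : h ∈ FF 𝒜) :
    extFF h (atomFF 𝒜 fun s => (h s).getD true) := fun s b hs => by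
  have hs𝒜 : s ∈ 𝒜 := hh.1 s (by simp [hs])
  simp [atomFF, hs𝒜, hs]

end Atoms

theorem mk_FF_le {α : Type*} {𝒜 : Set (Set α)} (h𝒜 : 𝒜.Infinite) : #(FF 𝒜) ≤ #𝒜 := by
  have : Infinite 𝒜 := h𝒜.to_subtype
  -- `WithZero Bool` is `Option Bool` with `none` as its zero
  let toFinsupp (h : FF 𝒜) : 𝒜 →₀ WithZero Bool :=
    Finsupp.ofSupportFinite (fun s => h.1 s) (h.2.2.preimage Subtype.val_injective.injOn)
  have hinj : Injective toFinsupp := fun h₁ h₂ heq => Subtype.ext <| funext fun s => by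
    by_cases hs : s ∈ 𝒜
    · exact DFunLike.congr_fun heq ⟨s, hs⟩
    · rw [not_imp_comm.1 (h₁.2.1 s) hs, not_imp_comm.1 (h₂.2.1 s) hs]
  refine (mk_le_of_injective hinj).trans ?_
  have : Finite (WithZero Bool) := inferInstanceAs (Finite (Option Bool))
  simpa using (lift_le_aleph0.2 (lt_aleph0_of_finite _).le).trans (aleph0_le_mk 𝒜)

section RegularCardinal

variable {κ : Cardinal}

theorem mk_eq_of_not_bddAbove (hκ : κ.IsRegular) {S : Set κ.ord.ToType} (hS : ¬ BddAbove S) :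
    #S = κ := by
  refine le_antisymm ((mk_set_le S).trans_eq (by simp)) ?_
  simpa [Ordinal.cof_toType, hκ.cof_ord] using Order.cof_le (IsCofinal.of_not_bddAbove hS)

theorem not_bddAbove_of_le_mk (hκ : ℵ₀ ≤ κ) {S : Set κ.ord.ToType} (hS : κ ≤ #S) :
    ¬ BddAbove S := by
  rintro ⟨b, hb⟩
  have hIic : #(Iic b) < κ := by
    rw [← Iio_insert]
    exact mk_insert_le.trans_lt
      (add_lt_of_lt hκ (by simpa using mk_Iio_lt b (by simp)) (one_lt_aleph0.trans_le hκ))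
  exact (hS.trans (mk_le_mk_of_subset hb)).not_gt hIic

theorem exists_forall_splits_of_finite (hκ : κ.IsRegular) {𝒜 : Set (Set κ.ord.ToType)}
    (h𝒜 : 𝒜.Finite) (hind : kIndepF 𝒜) :
    ∃ X : Set κ.ord.ToType, #X = κ ∧ ∀ h ∈ FF 𝒜, splits X (bc h) := by
  have hatom (g : 𝒜 → Bool) : #(bc (atomFF 𝒜 g)) = κ :=
    mk_eq_of_not_bddAbove hκ (hind _ (atomFF_mem_FF h𝒜 g))
  obtain ⟨X, hX⟩ := exists_forall_mk_inter_eq_and_mk_diff_eq pairwise_disjoint_bc_atomFF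
    fun g => (hatom g).symm ▸ hκ.aleph0_le
  have hunb (g : 𝒜 → Bool) :
      ¬ BddAbove (bc (atomFF 𝒜 g) ∩ X) ∧ ¬ BddAbove (bc (atomFF 𝒜 g) \ X) :=
    ⟨not_bddAbove_of_le_mk hκ.aleph0_le ((hX g).1.trans (hatom g)).ge,
      not_bddAbove_of_le_mk hκ.aleph0_le ((hX g).2.trans (hatom g)).ge⟩
  refine ⟨X, le_antisymm ((mk_set_le X).trans_eq (by simp)) ?_, fun h hh => ?_⟩
  · calc κ = #(bc (atomFF 𝒜 fun _ => true) ∩ X : Set _) := ((hX _).1.trans (hatom _)).symm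
      _ ≤ #X := mk_le_mk_of_subset inter_subset_right
  · have hsub := bc_subset_bc_of_extFF (extFF_atomFF_getD hh)
    exact ⟨fun hbdd => (hunb _).1 (hbdd.mono (inter_subset_inter_left X hsub)),
      fun hbdd => (hunb _).2 (hbdd.mono (sdiff_subset_sdiff_left hsub))⟩

end RegularCardinal

namespace maxIndep

variable {κ : Cardinal} {𝒜 : Set (Set κ.ord.ToType)}

theorem not_exists_forall_splits (hκ : κ ≠ 0) (hmax : maxIndep κ 𝒜) :
    ¬ ∃ X : Set κ.ord.ToType, #X = κ ∧ ∀ h ∈ FF 𝒜, splits X (bc h) := by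
  rintro ⟨X, hXκ, hX⟩
  have : Nonempty κ.ord.ToType := by simpa [Ordinal.nonempty_toType_iff] using hκ
  have hext : kIndepFam κ (insert X 𝒜) :=
    ⟨forall_mem_insert.2 ⟨hXκ, hmax.1.1⟩, kIndepF_insert_of_forall_splits hX⟩
  exact not_mem_of_forall_splits hX (hmax.2 _ hext (subset_insert X 𝒜) ▸ mem_insert X 𝒜)

theorem infinite (hκ : κ.IsRegular) (hmax : maxIndep κ 𝒜) : 𝒜.Infinite := fun h𝒜 =>
  hmax.not_exists_forall_splits hκ.pos.ne' (exists_forall_splits_of_finite hκ h𝒜 hmax.1.2)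

theorem reap_le_mk (hκ : κ.IsRegular) (hmax : maxIndep κ 𝒜) : reap κ ≤ #𝒜 := by
  have hcard : ∀ r ∈ bc '' FF 𝒜, #r = κ := by
    rintro _ ⟨h, hh, rfl⟩
    exact mk_eq_of_not_bddAbove hκ (hmax.1.2 h hh)
  have hunsplit : ¬ ∃ X : Set κ.ord.ToType, #X = κ ∧ ∀ r ∈ bc '' FF 𝒜, splits X r :=
    fun ⟨X, hXκ, hX⟩ => hmax.not_exists_forall_splits hκ.pos.ne'
      ⟨X, hXκ, fun h hh => hX _ ⟨h, hh, rfl⟩⟩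
  calc reap κ ≤ #(bc '' FF 𝒜) := csInf_le' ⟨bc '' FF 𝒜, rfl, hcard, hunsplit⟩
    _ ≤ #(FF 𝒜) := mk_image_le
    _ ≤ #𝒜 := mk_FF_le (hmax.infinite hκ)

end maxIndep

theorem stmt_3_general (κ : Cardinal) (hreg : κ.IsRegular)
    (𝒜 : Set (Set κ.ord.ToType)) (hmax : maxIndep κ 𝒜) :
    (¬ ∃ X : Set κ.ord.ToType, #X = κ ∧ ∀ h ∈ FF 𝒜, splits X (bc h)) ∧
    reap κ ≤ #𝒜 ∧ reap κ ≤ iNum κ :=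
  ⟨hmax.not_exists_forall_splits hreg.pos.ne', hmax.reap_le_mk hreg,
    le_csInf ⟨#𝒜, 𝒜, hmax, rfl⟩ fun _ ⟨_, hℬ, hc⟩ => hc ▸ hℬ.reap_le_mk hreg⟩

/-- Boolean combinations of a maximal κ-independent family are not split by a single set;
hence 𝔯(κ) ≤ |𝒜| and 𝔯(κ) ≤ 𝔦(κ). -/
theorem stmt_3 (κ : Cardinal) (hreg : κ.IsRegular) (hunc : ℵ₀ < κ)
    (𝒜 : Set (Set κ.ord.ToType)) (hmax : maxIndep κ 𝒜) :
    (¬ ∃ X : Set κ.ord.ToType, #X = κ ∧ ∀ h ∈ FF 𝒜, splits X (bc h)) ∧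
    reap κ ≤ #𝒜 ∧ reap κ ≤ iNum κ :=
  stmt_3_general κ hreg 𝒜 hmax
end

section
/- A $\kappa$-independent family $\mathcal{A}$ is densely maximal if and only if it satisfies: for all $h \in \mathrm{FF}_{<\omega,\kappa}(\mathcal{A})$ and all $X \subseteq \mathcal{A}^h$, either $\mathcal{A}^h \setminus X$ belongs to the density ideal $\mathrm{id}_{<\omega,\kappa}(\mathcal{A})$ (equivalently, is contained in a member of it), or there is $h' \supseteq h$ in $\mathrm{FF}_{<\omega,\kappa}(\mathcal{A})$ with $\mathcal{A}^{h'} \subseteq \mathcal{A}^h \setminus X$. -/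
open Set Cardinal

/-- The density ideal: `X` is in it iff every finite Boolean combination can be refined
to one disjoint from `X`. -/
def densId {α : Type*} (𝒜 : Set (Set α)) : Set (Set α) :=
  {X | ∀ h ∈ FF 𝒜, ∃ h' ∈ FF 𝒜, extFF h h' ∧ bc h' ∩ X = ∅}

/-- `𝒜` is densely maximal: every `X ∈ [κ]^κ \ 𝒜` is decided (mod the combination)
below every finite Boolean combination. -/
def denselyMax (κ : Cardinal) (𝒜 : Set (Set κ.ord.ToType)) : Prop :=
  ∀ X : Set κ.ord.ToType, #X = κ → X ∉ 𝒜 → ∀ h ∈ FF 𝒜,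
    ∃ h' ∈ FF 𝒜, extFF h h' ∧ (bc h' ∩ X = ∅ ∨ bc h' \ X = ∅)

/-! Over a type of size `κ ≥ ℵ₀`, one of `Y` and `Yᶜ` has size `κ`, and deciding `Y` below a
Boolean combination is the same as deciding `Yᶜ`; members of `𝒜` are decided by adding them to
the combination. So dense maximality lets every set be decided below every combination. For the
forward direction, given `Z = 𝒜^h \ X` and any `g`, either `g` contradicts `h` (then `𝒜^g` misses
`𝒜^h`), or `g ∪ h` has an extension deciding `Z`; lying inside `Z` is what the second alternative
excludes, so that extension misses `Z`. The converse applies the dichotomy to `𝒜^h ∩ X`. -/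

section FiniteFunctions

variable {α : Type*} {𝒜 : Set (Set α)}

lemma extFF_refl (h : Set α → Option Bool) : extFF h h := fun _ _ => id

lemma extFF_trans {f g h : Set α → Option Bool} (hfg : extFF f g) (hgh : extFF g h) :
    extFF f h := fun s b hs => hgh s b (hfg s b hs)

lemma bc_anti {h h' : Set α → Option Bool} (he : extFF h h') : bc h' ⊆ bc h := fun _ hx s =>
  ⟨fun hs => (hx s).1 (he s true hs), fun hs => (hx s).2 (he s false hs)⟩

def Decides (h : Set α → Option Bool) (Y : Set α) : Prop :=
  bc h ∩ Y = ∅ ∨ bc h \ Y = ∅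

lemma decides_compl_iff {h : Set α → Option Bool} {Y : Set α} : Decides h Yᶜ ↔ Decides h Y := by
  rw [Decides, Decides, ← sdiff_eq, sdiff_compl, or_comm]

lemma decides_of_ne_none {h : Set α → Option Bool} {Y : Set α} (hY : h Y ≠ none) :
    Decides h Y := by
  obtain ⟨b, hb⟩ := Option.ne_none_iff_exists'.1 hY
  cases b
  · exact Or.inl (eq_empty_of_forall_notMem fun x hx => (hx.1 Y).2 hb hx.2)
  · exact Or.inr (sdiff_eq_empty.2 fun x hx => (hx Y).1 hb)

open Classical in
lemma update_mem_FF {h : Set α → Option Bool} (hh : h ∈ FF 𝒜) {Y : Set α} (hY : Y ∈ 𝒜)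
    (b : Bool) : Function.update h Y (some b) ∈ FF 𝒜 := by
  refine ⟨fun s hs => ?_, (hh.2.insert Y).subset fun s hs => ?_⟩
  · by_cases hsY : s = Y
    · exact hsY ▸ hY
    · exact hh.1 s (by simpa [hsY] using hs)
  · by_cases hsY : s = Y
    · exact Or.inl hsY
    · exact Or.inr (by simpa [hsY] using hs)

lemma exists_ext_ne_none {h : Set α → Option Bool} (hh : h ∈ FF 𝒜) {Y : Set α} (hY : Y ∈ 𝒜) :
    ∃ h' ∈ FF 𝒜, extFF h h' ∧ h' Y ≠ none := by
  classical
  cases hhY : h Y with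
  | some b => exact ⟨h, hh, extFF_refl h, by simp [hhY]⟩
  | none =>
    refine ⟨Function.update h Y (some true), update_mem_FF hh hY true, fun s b hs => ?_, by simp⟩
    have hsY : s ≠ Y := by rintro rfl; simp [hhY] at hs
    simpa [hsY] using hs

/-- The union of `g` and `h`, with `g` taking precedence where both are defined. -/
def unionFF (g h : Set α → Option Bool) : Set α → Option Bool :=
  fun s => (g s).elim (h s) some

lemma unionFF_mem {g h : Set α → Option Bool} (hg : g ∈ FF 𝒜) (hh : h ∈ FF 𝒜) :
    unionFF g h ∈ FF 𝒜 := by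
  refine ⟨fun s hs => ?_, (hg.2.union hh.2).subset fun s hs => ?_⟩
  · cases hgs : g s with
    | some b => exact hg.1 s (by simp [hgs])
    | none => exact hh.1 s (by simpa [unionFF, hgs] using hs)
  · cases hgs : g s with
    | some b => exact Or.inl (by simp [hgs])
    | none => exact Or.inr (by simpa [unionFF, hgs] using hs)

lemma extFF_unionFF_left (g h : Set α → Option Bool) : extFF g (unionFF g h) := by
  intro s b hs
  simp [unionFF, hs]

lemma extFF_unionFF_right {g h : Set α → Option Bool}
    (hcomp : ∀ s b b', g s = some b → h s = some b' → b = b') : extFF h (unionFF g h) := by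
  intro s b hs
  cases hgs : g s with
  | none => simp [unionFF, hgs, hs]
  | some c => simp [unionFF, hgs, hcomp s c b hgs hs]

lemma bc_inter_bc_eq_empty {g h : Set α → Option Bool} {s : Set α} {b b' : Bool}
    (hg : g s = some b) (hh : h s = some b') (hne : b ≠ b') : bc g ∩ bc h = ∅ := by
  refine eq_empty_of_forall_notMem fun x ⟨hxg, hxh⟩ => ?_
  cases b <;> cases b'
  all_goals first
    | exact hne rfl
    | exact (hxg s).2 hg ((hxh s).1 hh)
    | exact (hxh s).2 hh ((hxg s).1 hg)

lemma exists_common_ext_or_bc_inter_eq_empty {g h : Set α → Option Bool} (hg : g ∈ FF 𝒜)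
    (hh : h ∈ FF 𝒜) :
    (∃ m ∈ FF 𝒜, extFF g m ∧ extFF h m) ∨ bc g ∩ bc h = ∅ := by
  by_cases hcomp : ∀ s b b', g s = some b → h s = some b' → b = b'
  · exact Or.inl ⟨unionFF g h, unionFF_mem hg hh, extFF_unionFF_left g h,
      extFF_unionFF_right hcomp⟩
  · push Not at hcomp
    obtain ⟨s, b, b', hgs, hhs, hne⟩ := hcomp
    exact Or.inr (bc_inter_bc_eq_empty hgs hhs hne)

lemma mem_densId_or_exists_ext_subset {h : Set α → Option Bool} (hh : h ∈ FF 𝒜) {Z : Set α}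
    (hZ : Z ⊆ bc h) (hdec : ∀ m ∈ FF 𝒜, ∃ m' ∈ FF 𝒜, extFF m m' ∧ Decides m' Z) :
    Z ∈ densId 𝒜 ∨ ∃ h' ∈ FF 𝒜, extFF h h' ∧ bc h' ⊆ Z := by
  refine or_iff_not_imp_right.2 fun hnot g hg => ?_
  rcases exists_common_ext_or_bc_inter_eq_empty hg hh with ⟨m, hm, hgm, hhm⟩ | hdisj
  · obtain ⟨m', hm', hmm', hmiss | hinside⟩ := hdec m hm
    · exact ⟨m', hm', extFF_trans hgm hmm', hmiss⟩
    · exact absurd ⟨m', hm', extFF_trans hhm hmm', sdiff_eq_empty.1 hinside⟩ hnot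
  · exact ⟨g, hg, extFF_refl g, subset_empty_iff.1 (hdisj ▸ inter_subset_inter_right _ hZ)⟩

lemma exists_ext_decides_of_dichotomy {h : Set α → Option Bool} {X : Set α}
    (hX : bc h \ (bc h ∩ X) ∈ densId 𝒜 ∨
      ∃ h' ∈ FF 𝒜, extFF h h' ∧ bc h' ⊆ bc h \ (bc h ∩ X))
    (hh : h ∈ FF 𝒜) : ∃ h' ∈ FF 𝒜, extFF h h' ∧ Decides h' X := by
  rw [sdiff_self_inter] at hX
  rcases hX with hid | ⟨h', hh', hhh', hsub⟩
  · obtain ⟨h', hh', hhh', hdisj⟩ := hid h hh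
    refine ⟨h', hh', hhh', Or.inr (sdiff_eq_empty.2 fun x hx => ?_)⟩
    by_contra hxX
    exact (eq_empty_iff_forall_notMem.1 hdisj) x ⟨hx, bc_anti hhh' hx, hxX⟩
  · exact ⟨h', hh', hhh', Or.inl (eq_empty_of_forall_notMem fun x hx => (hsub hx.1).2 hx.2)⟩

lemma mk_compl_eq_of_mk_ne {β : Type*} [Infinite β] {Y : Set β} (hY : #Y ≠ #β) :
    #(Yᶜ : Set β) = #β :=
  mk_compl_of_infinite Y (lt_of_le_of_ne (mk_set_le Y) hY)

end FiniteFunctions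

lemma denselyMax.exists_ext_decides {κ : Cardinal} {𝒜 : Set (Set κ.ord.ToType)}
    (hdm : denselyMax κ 𝒜) (hκ : ℵ₀ ≤ κ) (Y : Set κ.ord.ToType)
    {h : Set κ.ord.ToType → Option Bool} (hh : h ∈ FF 𝒜) :
    ∃ h' ∈ FF 𝒜, extFF h h' ∧ Decides h' Y := by
  wlog hY : #Y = κ generalizing Y with H
  · have hcard : #κ.ord.ToType = κ := by rw [Cardinal.mk_toType, Cardinal.card_ord]
    have : Infinite κ.ord.ToType := Cardinal.infinite_iff.2 (by rwa [hcard])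
    have hYc : #(Yᶜ : Set κ.ord.ToType) = #κ.ord.ToType := mk_compl_eq_of_mk_ne (by rwa [hcard])
    simpa only [decides_compl_iff] using H Yᶜ (hYc.trans hcard)
  by_cases hY𝒜 : Y ∈ 𝒜
  · obtain ⟨h', hh', hhh', hY'⟩ := exists_ext_ne_none hh hY𝒜
    exact ⟨h', hh', hhh', decides_of_ne_none hY'⟩
  · exact hdm Y hY hY𝒜 h hh

theorem stmt_9_general (κ : Cardinal) (hunc : ℵ₀ < κ)
    (𝒜 : Set (Set κ.ord.ToType)) :
    denselyMax κ 𝒜 ↔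
      ∀ h ∈ FF 𝒜, ∀ X : Set κ.ord.ToType, X ⊆ bc h →
        bc h \ X ∈ densId 𝒜 ∨
        ∃ h' ∈ FF 𝒜, extFF h h' ∧ bc h' ⊆ bc h \ X := by
  constructor
  · intro hdm h hh X _
    exact mem_densId_or_exists_ext_subset hh sdiff_subset
      fun m hm => hdm.exists_ext_decides hunc.le _ hm
  · intro hdich X _ _ h hh
    exact exists_ext_decides_of_dichotomy (hdich h hh (bc h ∩ X) inter_subset_left) hh

/-- Characterization of dense maximality via the density ideal. -/
theorem stmt_9 (κ : Cardinal) (hreg : κ.IsRegular) (hunc : ℵ₀ < κ)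
    (𝒜 : Set (Set κ.ord.ToType)) (hsz : ∀ X ∈ 𝒜, #X = κ) (hind : kIndepF 𝒜) :
    denselyMax κ 𝒜 ↔
      ∀ h ∈ FF 𝒜, ∀ X : Set κ.ord.ToType, X ⊆ bc h →
        bc h \ X ∈ densId 𝒜 ∨
        ∃ h' ∈ FF 𝒜, extFF h h' ∧ bc h' ⊆ bc h \ X :=
  stmt_9_general κ hunc 𝒜
end
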